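/- Let q = q_r·1₂ + i(q⃗·σ) ∈ SU(2), let a, λ ∈ ℂ, and let u ∈ ℂ² be nonzero. If (i·a·1₂ + q)u = λ·u and (q† − i·a·1₂)u = λ·u, then λ = q_r and (a·1₂ + q⃗·σ)u = 0; consequently a is real with a = |q⃗| or a = −|q⃗|. -/

import Mathlib

/-- The Pauli matrices `σ₁, σ₂, σ₃`. -/
noncomputable def pauli1 : Matrix (Fin 2) (Fin 2) ℂ := !![0, 1; 1, 0]
noncomputable def pauli2 : Matrix (Fin 2) (Fin 2) ℂ := !![0, -Complex.I; Complex.I, 0]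
noncomputable def pauli3 : Matrix (Fin 2) (Fin 2) ℂ := !![1, 0; 0, -1]

/-- `q⃗·σ = q₁σ₁ + q₂σ₂ + q₃σ₃` for `q⃗ = (q₁,q₂,q₃) ∈ ℝ³`. -/
noncomputable def pauliVec (q1 q2 q3 : ℝ) : Matrix (Fin 2) (Fin 2) ℂ :=
  (q1 : ℂ) • pauli1 + (q2 : ℂ) • pauli2 + (q3 : ℂ) • pauli3

/-!
Since `q⃗·σ` is Hermitian, `q† = q_r − i(q⃗·σ)`. Adding the two eigenvalue equations gives
`2 q_r u = 2 λ u`, subtracting them gives `2i (a + q⃗·σ) u = 0`. So `u` is an eigenvector of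
`q⃗·σ` with eigenvalue `−a`, and `(q⃗·σ)² = |q⃗|²` forces `a² = |q⃗|²`.
-/

open Matrix

theorem Matrix.sq_eq_of_mul_self_eq_smul_one_of_mulVec_eq_smul {K n : Type*} [Field K]
    [Fintype n] [DecidableEq n] {A : Matrix n n K} {c μ : K} (hA : A * A = c • 1)
    {u : n → K} (hu : u ≠ 0) (hμ : A *ᵥ u = μ • u) : μ ^ 2 = c := by
  refine smul_left_injective K hu ?_
  calc μ ^ 2 • u = A *ᵥ (A *ᵥ u) := by rw [hμ, mulVec_smul, hμ, smul_smul, sq]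
    _ = c • u := by rw [mulVec_mulVec, hA, smul_mulVec, one_mulVec]

theorem Matrix.IsHermitian.conjTranspose_ofReal_smul_one_add_I_smul {n : Type*} [Fintype n]
    [DecidableEq n] {P : Matrix n n ℂ} (hP : P.IsHermitian) (r : ℝ) :
    ((r : ℂ) • (1 : Matrix n n ℂ) + Complex.I • P)ᴴ = (r : ℂ) • 1 - Complex.I • P := by
  simp [conjTranspose_smul, hP.eq, sub_eq_add_neg]

theorem Complex.eq_sqrt_or_eq_neg_sqrt_of_sq_eq {z : ℂ} {s : ℝ} (hs : 0 ≤ s) (h : z ^ 2 = s) :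
    z = (Real.sqrt s : ℂ) ∨ z = -(Real.sqrt s : ℂ) := by
  rw [← sq_eq_sq_iff_eq_or_eq_neg, ← ofReal_pow, Real.sq_sqrt hs, h]

theorem pauliVec_isHermitian (q1 q2 q3 : ℝ) : (pauliVec q1 q2 q3).IsHermitian := by
  ext i j
  fin_cases i <;> fin_cases j <;> simp [pauliVec, pauli1, pauli2, pauli3]

theorem pauliVec_mul_self (q1 q2 q3 : ℝ) :
    pauliVec q1 q2 q3 * pauliVec q1 q2 q3 = ((q1 ^ 2 + q2 ^ 2 + q3 ^ 2 : ℝ) : ℂ) • 1 := by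
  ext i j
  fin_cases i <;> fin_cases j <;>
    simp [pauliVec, pauli1, pauli2, pauli3, mul_apply, Fin.sum_univ_two] <;> ring_nf <;>
    simp [Complex.I_sq]

theorem quaternionicDirac_eigenvalue_algebraic_general
    (q : Matrix (Fin 2) (Fin 2) ℂ) (qr q1 q2 q3 : ℝ)
    (hq : q = (qr : ℂ) • (1 : Matrix (Fin 2) (Fin 2) ℂ) + Complex.I • pauliVec q1 q2 q3)
    (a lam : ℂ) (u : Fin 2 → ℂ) (hu : u ≠ 0)
    (h1 : ((Complex.I * a) • (1 : Matrix (Fin 2) (Fin 2) ℂ) + q).mulVec u = lam • u)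
    (h2 : (q.conjTranspose - (Complex.I * a) • (1 : Matrix (Fin 2) (Fin 2) ℂ)).mulVec u = lam • u) :
    lam = (qr : ℂ) ∧
    (a • (1 : Matrix (Fin 2) (Fin 2) ℂ) + pauliVec q1 q2 q3).mulVec u = 0 ∧
    (a = (Real.sqrt (q1 ^ 2 + q2 ^ 2 + q3 ^ 2) : ℂ) ∨
      a = -(Real.sqrt (q1 ^ 2 + q2 ^ 2 + q3 ^ 2) : ℂ)) := by
  subst hq
  rw [(pauliVec_isHermitian q1 q2 q3).conjTranspose_ofReal_smul_one_add_I_smul] at h2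
  simp only [add_mulVec, sub_mulVec, smul_mulVec, one_mulVec] at h1 h2 ⊢
  have hlam : (lam - qr) • u = 0 := by linear_combination (norm := module) (-1 / 2 : ℂ) • (h1 + h2)
  have hker : a • u + pauliVec q1 q2 q3 *ᵥ u = 0 := by
    have h : (2 * Complex.I) • (a • u + pauliVec q1 q2 q3 *ᵥ u) = 0 := by
      linear_combination (norm := module) h1 - h2
    exact (smul_eq_zero.mp h).resolve_left (by simp)
  have ha : a ^ 2 = ((q1 ^ 2 + q2 ^ 2 + q3 ^ 2 : ℝ) : ℂ) := by
    rw [← neg_sq]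
    exact sq_eq_of_mul_self_eq_smul_one_of_mulVec_eq_smul (pauliVec_mul_self q1 q2 q3) hu
      (by rw [neg_smul]; exact eq_neg_of_add_eq_zero_right hker)
  exact ⟨sub_eq_zero.mp ((smul_eq_zero.mp hlam).resolve_right hu), hker,
    Complex.eq_sqrt_or_eq_neg_sqrt_of_sq_eq (by positivity) ha⟩

/-- Algebraic reduction of the quaternionic half-line Dirac eigenvalue problem under
the exponential ansatz `ψ(z) = (u, qu)·e^{−a z}`: if `q = q_r·1₂ + i(q⃗·σ) ∈ SU(2)`,
`u ≠ 0`, `(i·a·1₂ + q)u = λ·u` and `(q† − i·a·1₂)u = λ·u`, then `λ = q_r` and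
`(a·1₂ + q⃗·σ)u = 0`; consequently `a` is real with `a = |q⃗|` or `a = −|q⃗|`. -/
theorem quaternionicDirac_eigenvalue_algebraic
    (q : Matrix (Fin 2) (Fin 2) ℂ) (qr q1 q2 q3 : ℝ)
    (hq : q = (qr : ℂ) • (1 : Matrix (Fin 2) (Fin 2) ℂ) + Complex.I • pauliVec q1 q2 q3)
    (hnorm : qr ^ 2 + (q1 ^ 2 + q2 ^ 2 + q3 ^ 2) = 1)
    (a lam : ℂ) (u : Fin 2 → ℂ) (hu : u ≠ 0)
    (h1 : ((Complex.I * a) • (1 : Matrix (Fin 2) (Fin 2) ℂ) + q).mulVec u = lam • u)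
    (h2 : (q.conjTranspose - (Complex.I * a) • (1 : Matrix (Fin 2) (Fin 2) ℂ)).mulVec u = lam • u) :
    lam = (qr : ℂ) ∧
    (a • (1 : Matrix (Fin 2) (Fin 2) ℂ) + pauliVec q1 q2 q3).mulVec u = 0 ∧
    (a = (Real.sqrt (q1 ^ 2 + q2 ^ 2 + q3 ^ 2) : ℂ) ∨
      a = -(Real.sqrt (q1 ^ 2 + q2 ^ 2 + q3 ^ 2) : ℂ)) :=
  quaternionicDirac_eigenvalue_algebraic_general q qr q1 q2 q3 hq a lam u hu h1 h2
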